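/- For any bipartite quasi-state ρ on ℂ^{d_A}⊗ℂ^{d_B} and any natural number n ≥ 1, the one-shot exact entanglement cost under PPTq operations of the n-fold tensor power satisfies E^{(1)}_{0,C,PPTq}(ρ^{⊗n}) ≤ log₂ ⌈2^{n·E_N(ρ)}⌉, where E_N is the logarithmic negativity. -/

import Mathlib

open scoped BigOperators ComplexOrder

noncomputable section

/-- Bipartite matrices on `ℂ^{IA} ⊗ ℂ^{IB}`, indexed by pairs. -/
abbrev BMat (IA IB : Type) : Type := Matrix (IA × IB) (IA × IB) ℂ

/-- Partial transpose on the `B` system: `(X^{T_B})_{(i,j),(k,l)} = X_{(i,l),(k,j)}`. -/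
def ptB {IA IB : Type} (X : BMat IA IB) : BMat IA IB :=
  fun p q => X (p.1, q.2) (q.1, p.2)

/-- Trace norm `‖X‖₁ = tr √(X† X)`. -/
noncomputable def traceNorm {n : Type} [Fintype n] [DecidableEq n]
    (X : Matrix n n ℂ) : ℝ :=
  (let hH := (Matrix.posSemidef_conjTranspose_mul_self X).1
   (hH.eigenvectorUnitary.1 * Matrix.diagonal (((↑) : ℝ → ℂ) ∘ Real.sqrt ∘ hH.eigenvalues) *
     (star hH.eigenvectorUnitary : Matrix n n ℂ)).trace).re

/-- Operator norm (largest singular value). -/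
noncomputable def opNorm {n : Type} [Fintype n] [DecidableEq n] (X : Matrix n n ℂ) : ℝ :=
  ‖Matrix.toEuclideanCLM (𝕜 := ℂ) X‖

/-- Logarithmic negativity `E_N(X) = log₂ ‖X^{T_B}‖₁`. -/
noncomputable def EN {IA IB : Type} [Fintype IA] [Fintype IB] [DecidableEq IA] [DecidableEq IB]
    (X : BMat IA IB) : ℝ :=
  Real.logb 2 (traceNorm (ptB X))

/-- The extension `id_k ⊗ f` of a map on matrices, acting blockwise. -/
def extMap {I J : Type} (f : Matrix I I ℂ → Matrix J J ℂ) (k : ℕ)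
    (M : Matrix (Fin k × I) (Fin k × I) ℂ) : Matrix (Fin k × J) (Fin k × J) ℂ :=
  fun p q => f (fun i i' => M (p.1, i) (q.1, i')) p.2 q.2

/-- A map on matrices is completely positive if all its extensions `id_k ⊗ f`
map positive semidefinite matrices to positive semidefinite matrices. -/
def CompletelyPositive {I J : Type} [Fintype I] [Fintype J]
    (f : Matrix I I ℂ → Matrix J J ℂ) : Prop :=
  ∀ (k : ℕ) (M : Matrix (Fin k × I) (Fin k × I) ℂ), M.PosSemidef → (extMap f k M).PosSemidef

/-- A PPTq operation: a Hermitian-preserving, trace-preserving linear map `N`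
such that `T_{B'} ∘ N ∘ T_B` is completely positive. -/
def IsPPTq {IA IB JA JB : Type} [Fintype IA] [Fintype IB] [Fintype JA] [Fintype JB]
    (N : BMat IA IB →ₗ[ℂ] BMat JA JB) : Prop :=
  (∀ X : BMat IA IB, X.IsHermitian → (N X).IsHermitian) ∧
  (∀ X : BMat IA IB, (N X).trace = X.trace) ∧
  CompletelyPositive (fun X => ptB (N (ptB X)))

/-- A bipartite quasi-state: Hermitian with trace one. -/
def IsQuasiState {IA IB : Type} [Fintype IA] [Fintype IB] (ρ : BMat IA IB) : Prop :=
  ρ.IsHermitian ∧ ρ.trace = 1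

/-- A bipartite quantum state: positive semidefinite with trace one. -/
def IsState {IA IB : Type} [Fintype IA] [Fintype IB] (ρ : BMat IA IB) : Prop :=
  ρ.PosSemidef ∧ ρ.trace = 1

/-- The maximally entangled state `Φ^d = (1/d) ∑_{i,j} |ii⟩⟨jj|`. -/
noncomputable def MES (d : ℕ) : BMat (Fin d) (Fin d) :=
  fun p q => if p.1 = p.2 ∧ q.1 = q.2 then (1 : ℂ) / d else 0

/-- `n`-fold tensor (Kronecker) power, with all `A` factors grouped against all `B` factors. -/
def tensorPow {IA IB : Type} (ρ : BMat IA IB) (n : ℕ) :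
    BMat (Fin n → IA) (Fin n → IB) :=
  fun p q => ∏ i : Fin n, ρ (p.1 i, p.2 i) (q.1 i, q.2 i)

/-- Tensor (Kronecker) product of two bipartite matrices, grouping `A` systems together
and `B` systems together. -/
def tensorMul {IA IB JA JB : Type} (ρ : BMat IA IB) (σ : BMat JA JB) :
    BMat (IA × JA) (IB × JB) :=
  fun p q => ρ (p.1.1, p.2.1) (q.1.1, q.2.1) * σ (p.1.2, p.2.2) (q.1.2, q.2.2)

/-- One-shot exact distillable entanglement under PPTq operations. -/
noncomputable def oneShotDistill {IA IB : Type} [Fintype IA] [Fintype IB]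
    (ρ : BMat IA IB) : ℝ :=
  sSup { x : ℝ | ∃ d : ℕ, 0 < d ∧ x = Real.logb 2 d ∧
    ∃ Λ : BMat IA IB →ₗ[ℂ] BMat (Fin d) (Fin d), IsPPTq Λ ∧ Λ ρ = MES d }

/-- One-shot exact entanglement cost under PPTq operations. -/
noncomputable def oneShotCost {IA IB : Type} [Fintype IA] [Fintype IB]
    (ρ : BMat IA IB) : ℝ :=
  sInf { x : ℝ | ∃ d : ℕ, 0 < d ∧ x = Real.logb 2 d ∧
    ∃ Λ : BMat (Fin d) (Fin d) →ₗ[ℂ] BMat IA IB, IsPPTq Λ ∧ Λ (MES d) = ρ }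

/-- The one-shot distillation error for `n` copies towards `Φ^d`, optimized over PPTq operations. -/
noncomputable def distillErr {IA IB : Type} [Fintype IA] [Fintype IB]
    [DecidableEq IA] [DecidableEq IB] (ρ : BMat IA IB) (n d : ℕ) : ℝ :=
  sInf { e : ℝ | ∃ Λ : BMat (Fin n → IA) (Fin n → IB) →ₗ[ℂ] BMat (Fin d) (Fin d),
    IsPPTq Λ ∧ e = traceNorm (Λ (tensorPow ρ n) - MES d) }

/-- The one-shot dilution error for preparing `n` copies from `Φ^d`, optimized over PPTq operations. -/
noncomputable def costErr {IA IB : Type} [Fintype IA] [Fintype IB]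
    [DecidableEq IA] [DecidableEq IB] (ρ : BMat IA IB) (n d : ℕ) : ℝ :=
  sInf { e : ℝ | ∃ Λ : BMat (Fin d) (Fin d) →ₗ[ℂ] BMat (Fin n → IA) (Fin n → IB),
    IsPPTq Λ ∧ e = traceNorm (tensorPow ρ n - Λ (MES d)) }

/-- Distillable entanglement under PPTq operations (asymptotically vanishing error). -/
noncomputable def EDppt {IA IB : Type} [Fintype IA] [Fintype IB]
    [DecidableEq IA] [DecidableEq IB] (ρ : BMat IA IB) : ℝ :=
  sSup { r : ℝ | Filter.Tendsto (fun n : ℕ => distillErr ρ n (2 ^ ⌊r * n⌋₊))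
    Filter.atTop (nhds 0) }

/-- Entanglement cost under PPTq operations (asymptotically vanishing error). -/
noncomputable def ECppt {IA IB : Type} [Fintype IA] [Fintype IB]
    [DecidableEq IA] [DecidableEq IB] (ρ : BMat IA IB) : ℝ :=
  sInf { r : ℝ | Filter.Tendsto (fun n : ℕ => costErr ρ n (2 ^ ⌈r * n⌉₊))
    Filter.atTop (nhds 0) }

/-- Tempered negativity `N_τ(σ | ρ)`. -/
noncomputable def temperedNeg {IA IB : Type} [Fintype IA] [Fintype IB]
    [DecidableEq IA] [DecidableEq IB] (σ ρ : BMat IA IB) : ℝ :=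
  sSup { t : ℝ | ∃ X : Matrix (IA × IB) (IA × IB) ℂ, X.IsHermitian ∧
    opNorm (ptB X) ≤ 1 ∧ (X * ρ).trace = (opNorm X : ℂ) ∧ (X * σ).trace = (t : ℂ) }

/-- Asymptotic exact conversion rate under PPTq operations. -/
noncomputable def convRate {IA IB JA JB : Type} [Fintype IA] [Fintype IB]
    [Fintype JA] [Fintype JB]
    (ρ : BMat IA IB) (σ : BMat JA JB) : ℝ :=
  sSup { r : ℝ | 0 ≤ r ∧ ∀ᶠ n : ℕ in Filter.atTop,
    ∃ Λ : BMat (Fin n → IA) (Fin n → IB) →ₗ[ℂ]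
          BMat (Fin ⌊r * n⌋₊ → JA) (Fin ⌊r * n⌋₊ → JB),
      IsPPTq Λ ∧ Λ (tensorPow ρ n) = tensorPow σ ⌊r * n⌋₊ }


/-! Write `ρ^Γ = P - N` with `P, N ⪰ 0` and `tr P + tr N = ‖ρ^Γ‖₁` (positive and negative parts).
Expanding `(P - N)^{⊗n}` and sorting the `2^n` product terms by the parity of the number of
`N` factors gives `(ρ^{⊗n})^Γ = M₊ - M₋` with `M₊, M₋ ⪰ 0` and
`tr M₊ + tr M₋ = ‖ρ^Γ‖₁^n ≤ d := ⌈2^{n E_N(ρ)}⌉`. Padding `M₊` and `M₋` with the same multiple of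
a state yields states `A, B` with `(d+1)/2 • A - (d-1)/2 • B = (ρ^{⊗n})^Γ`.
Let `Π₊, Π₋` be the projectors onto the symmetric and antisymmetric subspaces of `ℂ^d ⊗ ℂ^d`.
The map `X ↦ (tr (Π₊ X^Γ) • A + tr (Π₋ X^Γ) • B)^Γ` is PPTq, and since `(Φ^d)^Γ = F / d` for
the swap `F = Π₊ - Π₋`, it sends `Φ^d` to `ρ^{⊗n}`. -/

open Matrix Finset

section PartialTranspose

variable {IA IB : Type}

theorem isHermitian_ptB {X : BMat IA IB} (hX : X.IsHermitian) : (ptB X).IsHermitian :=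
  IsHermitian.ext fun p q => hX.apply (p.1, q.2) (q.1, p.2)

theorem trace_ptB [Fintype IA] [Fintype IB] (X : BMat IA IB) : (ptB X).trace = X.trace := rfl

def ptBLinear (IA IB : Type) : BMat IA IB →ₗ[ℂ] BMat IA IB where
  toFun := ptB
  map_add' _ _ := rfl
  map_smul' _ _ := rfl

end PartialTranspose

section PositiveSemidefinite

open scoped MatrixOrder

variable {m : Type} [Fintype m]

theorem Matrix.PosSemidef.exists_eq_conjTranspose_mul_self {A : Matrix m m ℂ}
    (hA : A.PosSemidef) : ∃ B : Matrix m m ℂ, A = Bᴴ * B := by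
  classical
  exact CStarAlgebra.nonneg_iff_eq_star_mul_self.mp hA.nonneg

theorem Matrix.PosSemidef.trace_sub_le_trace_add {P N : Matrix m m ℂ} (hN : N.PosSemidef) :
    (P - N).trace ≤ (P + N).trace := by
  rw [trace_sub, trace_add]
  exact (sub_le_self _ hN.trace_nonneg).trans (le_add_of_nonneg_right hN.trace_nonneg)

variable [DecidableEq m]

theorem Matrix.IsHermitian.posSemidef_inv_two_smul_one_add {U : Matrix m m ℂ}
    (hU : U.IsHermitian) (hUU : U * U = 1) : ((2 : ℂ)⁻¹ • (1 + U)).PosSemidef := by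
  have hsq : (1 + U) * (1 + U) = (2 : ℂ) • (1 + U) := by
    rw [add_mul, mul_add, mul_add, one_mul, mul_one, hUU, one_mul, two_smul]
    abel
  have hP : ((2 : ℂ)⁻¹ • (1 + U))ᴴ * ((2 : ℂ)⁻¹ • (1 + U)) = (2 : ℂ)⁻¹ • (1 + U) := by
    rw [conjTranspose_smul, conjTranspose_add, conjTranspose_one, hU.eq, smul_mul_smul, hsq,
      smul_smul]
    norm_num
  exact hP ▸ posSemidef_conjTranspose_mul_self _

theorem traceNorm_eq_trace_abs (X : Matrix m m ℂ) : (traceNorm X : ℂ) = (CFC.abs X).trace := by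
  have hX := posSemidef_conjTranspose_mul_self X
  have habs : CFC.abs X = cfc Real.sqrt (Xᴴ * X) :=
    (CFC.sqrt_eq_real_sqrt _ hX.nonneg).trans (cfcₙ_eq_cfc ..)
  have htr : 0 ≤ (CFC.abs X).trace := (CFC.abs_nonneg X).posSemidef.trace_nonneg
  rw [habs, hX.1.cfc_eq, IsHermitian.cfc] at htr ⊢
  exact (Complex.eq_re_of_ofReal_le (r := 0) (by rwa [Complex.ofReal_zero])).symm

theorem Matrix.IsHermitian.exists_sub_eq_traceNorm {X : Matrix m m ℂ} (hX : X.IsHermitian) :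
    ∃ P N : Matrix m m ℂ, P.PosSemidef ∧ N.PosSemidef ∧ X = P - N ∧
      (P + N).trace = traceNorm X :=
  ⟨X⁺, X⁻, (CFC.posPart_nonneg X).posSemidef, (CFC.negPart_nonneg X).posSemidef,
    (CFC.posPart_sub_negPart X hX).symm,
    by rw [traceNorm_eq_trace_abs, CFC.posPart_add_negPart X hX]⟩

variable [Nonempty m]

theorem exists_posSemidef_trace_eq_one : ∃ S : Matrix m m ℂ, S.PosSemidef ∧ S.trace = 1 :=
  ⟨(Fintype.card m : ℂ)⁻¹ • 1, PosSemidef.one.smul (by positivity), by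
    rw [trace_smul, trace_one, smul_eq_mul,
      inv_mul_cancel₀ (Nat.cast_ne_zero.2 Fintype.card_ne_zero)]⟩

theorem Matrix.PosSemidef.exists_eq_trace_smul {M : Matrix m m ℂ} (hM : M.PosSemidef) :
    ∃ S : Matrix m m ℂ, S.PosSemidef ∧ S.trace = 1 ∧ M = M.trace • S := by
  by_cases h : M.trace = 0
  · obtain ⟨S, hS, hS₁⟩ := exists_posSemidef_trace_eq_one (m := m)
    exact ⟨S, hS, hS₁, by rw [h, zero_smul, ← hM.trace_eq_zero_iff, h]⟩
  · refine ⟨M.trace⁻¹ • M, hM.smul (inv_nonneg_of_nonneg hM.trace_nonneg), ?_, ?_⟩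
    · rw [trace_smul, smul_eq_mul, inv_mul_cancel₀ h]
    · rw [smul_smul, mul_inv_cancel₀ h, one_smul]

theorem exists_smul_sub_smul_eq_of_trace_add_le {M Mp Mn : Matrix m m ℂ}
    (hMp : Mp.PosSemidef) (hMn : Mn.PosSemidef) (hM : M = Mp - Mn) (hM₁ : M.trace = 1) {d : ℕ}
    (hd : (Mp + Mn).trace ≤ d) :
    ∃ A B : Matrix m m ℂ, A.PosSemidef ∧ B.PosSemidef ∧ A.trace = 1 ∧ B.trace = 1 ∧
      (((d : ℂ) + 1) / 2) • A - (((d : ℂ) - 1) / 2) • B = M := by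
  obtain ⟨S, hS, hS₁⟩ := exists_posSemidef_trace_eq_one (m := m)
  set α : ℂ := ((d : ℂ) - (Mp + Mn).trace) / 2 with hα_def
  have hαS : (α • S).PosSemidef := hS.smul (by have := sub_nonneg.2 hd; positivity)
  obtain ⟨A, hA, hA₁, hAeq⟩ := (hMp.add hαS).exists_eq_trace_smul
  obtain ⟨B, hB, hB₁, hBeq⟩ := (hMn.add hαS).exists_eq_trace_smul
  have hdiff : Mp.trace - Mn.trace = 1 := by rw [← trace_sub, ← hM, hM₁]
  have htrA : (Mp + α • S).trace = ((d : ℂ) + 1) / 2 := by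
    rw [trace_add, trace_smul, hS₁, smul_eq_mul, mul_one, hα_def, trace_add]
    linear_combination hdiff / 2
  have htrB : (Mn + α • S).trace = ((d : ℂ) - 1) / 2 := by
    rw [trace_add, trace_smul, hS₁, smul_eq_mul, mul_one, hα_def, trace_add]
    linear_combination -hdiff / 2
  refine ⟨A, B, hA, hB, hA₁, hB₁, ?_⟩
  rw [← htrA, ← htrB, ← hAeq, ← hBeq, hM, add_sub_add_right_eq_sub]

end PositiveSemidefinite

section TensorFamily

variable {ι I J : Type} [Fintype ι]

def tensorFam (f : ι → BMat I J) : BMat (ι → I) (ι → J) :=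
  fun p q => ∏ i, f i (p.1 i, p.2 i) (q.1 i, q.2 i)

theorem tensorPow_eq_tensorFam (ρ : BMat I J) (n : ℕ) :
    tensorPow ρ n = tensorFam (fun _ : Fin n => ρ) := rfl

theorem ptB_tensorFam (f : ι → BMat I J) :
    ptB (tensorFam f) = tensorFam (fun i => ptB (f i)) := rfl

theorem tensorFam_conjTranspose (f : ι → BMat I J) :
    (tensorFam f)ᴴ = tensorFam (fun i => (f i)ᴴ) := by
  ext p q
  simp [tensorFam, conjTranspose_apply, star_prod]

variable [DecidableEq ι]

theorem tensorFam_piecewise_apply (t : Finset ι) (P N : ι → BMat I J) (p q) :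
    tensorFam (t.piecewise N P) p q =
      (∏ i ∈ univ \ t, P i (p.1 i, p.2 i) (q.1 i, q.2 i)) *
        ∏ i ∈ t, N i (p.1 i, p.2 i) (q.1 i, q.2 i) := by
  simp only [tensorFam, Finset.piecewise, Matrix.ite_apply]
  rw [prod_ite, filter_mem_eq_inter, ← sdiff_eq_filter, univ_inter, mul_comm]

theorem tensorFam_sub (P N : ι → BMat I J) :
    tensorFam (P - N) = ∑ t : Finset ι, (-1 : ℂ) ^ #t • tensorFam (t.piecewise N P) := by
  ext p q
  simp only [tensorFam_piecewise_apply, Matrix.sum_apply, Matrix.smul_apply, smul_eq_mul,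
    ← mul_assoc]
  exact prod_sub _ _ univ

theorem tensorFam_add (P N : ι → BMat I J) :
    tensorFam (P + N) = ∑ t : Finset ι, tensorFam (t.piecewise N P) := by
  ext p q
  simp only [Matrix.sum_apply, tensorFam_piecewise_apply]
  simp only [tensorFam, Pi.add_apply, Matrix.add_apply, add_comm (P _ _ _)]
  rw [prod_add, powerset_univ]
  simp only [mul_comm]

variable [Fintype I] [Fintype J]

theorem sum_pi_prod_eq_prod_sum (F : ι → I × J → ℂ) :
    ∑ p : (ι → I) × (ι → J), ∏ i, F i (p.1 i, p.2 i) = ∏ i, ∑ c : I × J, F i c := by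
  rw [Fintype.prod_sum]
  exact (Fintype.sum_equiv (Equiv.arrowProdEquivProdArrow ι (fun _ => I) (fun _ => J))
    _ _ fun _ => rfl).symm

theorem tensorFam_mul (f g : ι → BMat I J) :
    tensorFam f * tensorFam g = tensorFam (fun i => f i * g i) := by
  ext p q
  simp only [mul_apply, tensorFam, ← prod_mul_distrib]
  exact sum_pi_prod_eq_prod_sum fun i c => f i (p.1 i, p.2 i) c * g i c (q.1 i, q.2 i)

theorem trace_tensorFam (f : ι → BMat I J) : (tensorFam f).trace = ∏ i, (f i).trace := by
  simp only [trace, Matrix.diag]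
  exact sum_pi_prod_eq_prod_sum fun i c => f i c c

theorem posSemidef_tensorFam {f : ι → BMat I J} (hf : ∀ i, (f i).PosSemidef) :
    (tensorFam f).PosSemidef := by
  choose g hg using fun i => (hf i).exists_eq_conjTranspose_mul_self
  have : tensorFam f = (tensorFam g)ᴴ * tensorFam g := by
    rw [tensorFam_conjTranspose, tensorFam_mul]
    exact congrArg _ (funext hg)
  exact this ▸ posSemidef_conjTranspose_mul_self _

theorem exists_tensorFam_sub_eq_sub {P N : ι → BMat I J} (hP : ∀ i, (P i).PosSemidef)
    (hN : ∀ i, (N i).PosSemidef) :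
    ∃ Mp Mn : BMat (ι → I) (ι → J), Mp.PosSemidef ∧ Mn.PosSemidef ∧
      tensorFam (P - N) = Mp - Mn ∧ Mp + Mn = tensorFam (P + N) := by
  have hF (t : Finset ι) : (tensorFam (t.piecewise N P)).PosSemidef :=
    posSemidef_tensorFam fun i => by by_cases hi : i ∈ t <;> simp [hi, hP, hN]
  refine ⟨∑ t with Even #t, tensorFam (t.piecewise N P),
    ∑ t with ¬Even #t, tensorFam (t.piecewise N P),
    posSemidef_sum _ fun t _ => hF t, posSemidef_sum _ fun t _ => hF t, ?_, ?_⟩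
  · rw [tensorFam_sub, ← sum_filter_add_sum_filter_not univ (fun t => Even #t), sub_eq_add_neg,
      ← sum_neg_distrib]
    congr 1 <;> refine sum_congr rfl fun t ht => ?_
    · rw [(mem_filter.1 ht).2.neg_one_pow, one_smul]
    · rw [(Nat.not_even_iff_odd.1 (mem_filter.1 ht).2).neg_one_pow, neg_one_smul]
  · rw [tensorFam_add, sum_filter_add_sum_filter_not]

end TensorFamily

section TraceFormMap

open scoped Kronecker

variable {I J : Type} [Fintype I]

def traceFormMap (P : Matrix I I ℂ) (Q : Matrix J J ℂ) : Matrix I I ℂ →ₗ[ℂ] Matrix J J ℂ :=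
  ((traceLinearMap I ℂ ℂ).comp (LinearMap.mulLeft ℂ P)).smulRight Q

theorem traceFormMap_apply (P : Matrix I I ℂ) (Q : Matrix J J ℂ) (X : Matrix I I ℂ) :
    traceFormMap P Q X = (P * X).trace • Q := rfl

theorem isHermitian_traceFormMap {P X : Matrix I I ℂ} {Q : Matrix J J ℂ} (hP : P.IsHermitian)
    (hQ : Q.IsHermitian) (hX : X.IsHermitian) : (traceFormMap P Q X).IsHermitian := by
  rw [traceFormMap_apply]
  refine hQ.smul ?_
  rw [IsSelfAdjoint, ← trace_conjTranspose, conjTranspose_mul, hP.eq, hX.eq, trace_mul_comm]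

theorem posSemidef_trace_mul_blocks {k : ℕ} {P : Matrix I I ℂ}
    {M : Matrix (Fin k × I) (Fin k × I) ℂ} (hP : P.PosSemidef) (hM : M.PosSemidef) :
    (of fun p q : Fin k => (P * of fun i i' => M (p, i) (q, i')).trace).PosSemidef := by
  classical
  obtain ⟨R, rfl⟩ := hP.exists_eq_conjTranspose_mul_self
  let W (s : I) : Matrix (Fin k) (Fin k × I) ℂ := of fun p x => if x.1 = p then R s x.2 else 0
  have : (of fun p q : Fin k => (Rᴴ * R * of fun i i' => M (p, i) (q, i')).trace) =
      ∑ s, W s * M * (W s)ᴴ := by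
    ext p q
    simp only [W, trace, diag_apply, mul_apply, conjTranspose_apply, RCLike.star_def, of_apply,
      sum_mul, Matrix.sum_apply, ite_mul, zero_mul, Fintype.sum_prod_type, sum_ite_irrel,
      sum_const_zero, sum_ite_eq', mem_univ, ↓reduceIte, apply_ite star, star_zero, mul_ite,
      mul_zero]
    conv_lhs => enter [2, i]; rw [sum_comm]
    rw [sum_comm]
    exact sum_congr rfl fun s _ => sum_congr rfl fun i _ => sum_congr rfl fun j _ => by ring
  rw [this]
  exact posSemidef_sum _ fun s _ => hM.mul_mul_conjTranspose_same (W s)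

variable [Fintype J]

theorem completelyPositive_traceFormMap {P : Matrix I I ℂ} {Q : Matrix J J ℂ}
    (hP : P.PosSemidef) (hQ : Q.PosSemidef) : CompletelyPositive (traceFormMap P Q) := by
  intro k M hM
  have : extMap (traceFormMap P Q) k M =
      (of fun p q : Fin k => (P * of fun i i' => M (p, i) (q, i')).trace) ⊗ₖ Q := rfl
  rw [this]
  exact (posSemidef_trace_mul_blocks hP hM).kronecker hQ

theorem CompletelyPositive.add {f g : Matrix I I ℂ → Matrix J J ℂ}
    (hf : CompletelyPositive f) (hg : CompletelyPositive g) : CompletelyPositive (f + g) :=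
  fun k M hM => (hf k M hM).add (hg k M hM)

end TraceFormMap

section SwapOperator

variable {d : ℕ}

def swapOp (d : ℕ) : BMat (Fin d) (Fin d) :=
  Equiv.Perm.permMatrix ℂ (Equiv.prodComm (Fin d) (Fin d))

theorem ptB_MES : ptB (MES d) = (d : ℂ)⁻¹ • swapOp d := by
  ext p q
  simp [ptB, MES, swapOp, PEquiv.toMatrix_apply, Prod.ext_iff, eq_comm, and_comm]

theorem isHermitian_swapOp : (swapOp d).IsHermitian := by
  rw [IsHermitian, swapOp, conjTranspose_permMatrix]
  rfl

theorem swapOp_mul_swapOp : swapOp d * swapOp d = 1 := by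
  rw [swapOp, ← permMatrix_mul, show Equiv.prodComm (Fin d) (Fin d) * Equiv.prodComm _ _ = 1 from
    Equiv.ext fun _ => rfl, permMatrix_one]

theorem trace_swapOp : (swapOp d).trace = d := by
  simp only [swapOp, trace, Matrix.diag, PEquiv.toMatrix_apply, Fintype.sum_prod_type]
  simp [Prod.ext_iff, ite_and]

def symProj (d : ℕ) : BMat (Fin d) (Fin d) := (2 : ℂ)⁻¹ • (1 + swapOp d)

def antisymProj (d : ℕ) : BMat (Fin d) (Fin d) := (2 : ℂ)⁻¹ • (1 - swapOp d)

theorem posSemidef_symProj : (symProj d).PosSemidef :=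
  isHermitian_swapOp.posSemidef_inv_two_smul_one_add swapOp_mul_swapOp

theorem posSemidef_antisymProj : (antisymProj d).PosSemidef := by
  rw [antisymProj, sub_eq_add_neg]
  exact isHermitian_swapOp.neg.posSemidef_inv_two_smul_one_add
    (by rw [neg_mul_neg, swapOp_mul_swapOp])

theorem symProj_add_antisymProj : symProj d + antisymProj d = 1 := by
  rw [symProj, antisymProj, ← smul_add, add_add_sub_cancel, ← two_smul ℂ, smul_smul]
  norm_num

theorem trace_symProj_mul_ptB_MES (hd : d ≠ 0) :
    (symProj d * ptB (MES d)).trace = ((d : ℂ) + 1) / 2 := by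
  rw [ptB_MES, symProj, Matrix.mul_smul, Matrix.smul_mul, add_mul, one_mul, swapOp_mul_swapOp,
    trace_smul, trace_smul, trace_add, trace_swapOp, trace_one, Fintype.card_prod,
    Fintype.card_fin]
  simp only [smul_eq_mul, Nat.cast_mul]
  field_simp [Nat.cast_ne_zero.2 hd]
  ring

theorem trace_antisymProj_mul_ptB_MES (hd : d ≠ 0) :
    (antisymProj d * ptB (MES d)).trace = -(((d : ℂ) - 1) / 2) := by
  rw [ptB_MES, antisymProj, Matrix.mul_smul, Matrix.smul_mul, sub_mul, one_mul,
    swapOp_mul_swapOp, trace_smul, trace_smul, trace_sub, trace_swapOp, trace_one,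
    Fintype.card_prod, Fintype.card_fin]
  simp only [smul_eq_mul, Nat.cast_mul]
  field_simp [Nat.cast_ne_zero.2 hd]
  ring

end SwapOperator

section DilutionMap

variable {d : ℕ} {JA JB : Type}

def dilutionMap (d : ℕ) (A B : BMat JA JB) : BMat (Fin d) (Fin d) →ₗ[ℂ] BMat JA JB :=
  ptBLinear JA JB ∘ₗ (traceFormMap (symProj d) A + traceFormMap (antisymProj d) B) ∘ₗ
    ptBLinear (Fin d) (Fin d)

theorem dilutionMap_apply (A B : BMat JA JB) (X : BMat (Fin d) (Fin d)) :
    dilutionMap d A B X =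
      ptB ((symProj d * ptB X).trace • A + (antisymProj d * ptB X).trace • B) := rfl

theorem dilutionMap_MES (A B : BMat JA JB) (hd : d ≠ 0) :
    dilutionMap d A B (MES d) = ptB ((((d : ℂ) + 1) / 2) • A - (((d : ℂ) - 1) / 2) • B) := by
  rw [dilutionMap_apply, trace_symProj_mul_ptB_MES hd, trace_antisymProj_mul_ptB_MES hd,
    neg_smul, ← sub_eq_add_neg]

theorem isPPTq_dilutionMap [Fintype JA] [Fintype JB] {A B : BMat JA JB} (hA : A.PosSemidef) (hB : B.PosSemidef)
    (hA₁ : A.trace = 1) (hB₁ : B.trace = 1) : IsPPTq (dilutionMap d A B) := by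
  refine ⟨fun X hX => isHermitian_ptB ?_, fun X => ?_, ?_⟩
  · exact (isHermitian_traceFormMap posSemidef_symProj.1 hA.1 (isHermitian_ptB hX)).add
      (isHermitian_traceFormMap posSemidef_antisymProj.1 hB.1 (isHermitian_ptB hX))
  · rw [dilutionMap_apply, trace_ptB, trace_add, trace_smul, trace_smul, hA₁, hB₁, smul_eq_mul,
      smul_eq_mul, mul_one, mul_one, ← trace_add, ← add_mul, symProj_add_antisymProj, one_mul,
      trace_ptB]
  · exact (completelyPositive_traceFormMap posSemidef_symProj hA).add
      (completelyPositive_traceFormMap posSemidef_antisymProj hB)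

end DilutionMap

section OneShotCost

variable {IA IB : Type} [Fintype IA] [Fintype IB]

theorem oneShotCost_le_logb {ω : BMat IA IB} {d : ℕ} (hd : 0 < d)
    {Λ : BMat (Fin d) (Fin d) →ₗ[ℂ] BMat IA IB} (hΛ : IsPPTq Λ) (hΛω : Λ (MES d) = ω) :
    oneShotCost ω ≤ Real.logb 2 d :=
  csInf_le ⟨0, by
    rintro _ ⟨d', hd', rfl, -⟩
    exact Real.logb_nonneg one_lt_two (by exact_mod_cast hd')⟩ ⟨d, hd, rfl, Λ, hΛ, hΛω⟩

theorem oneShotCost_le_of_ptB_eq_sub {ω Mp Mn : BMat IA IB} (hMp : Mp.PosSemidef)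
    (hMn : Mn.PosSemidef) (hω : ptB ω = Mp - Mn) (hω₁ : ω.trace = 1) {d : ℕ}
    (hd : (Mp + Mn).trace ≤ d) : oneShotCost ω ≤ Real.logb 2 d := by
  classical
  have : Nonempty (IA × IB) := by
    by_contra h
    have := not_nonempty_iff.1 h
    exact one_ne_zero (hω₁ ▸ trace_eq_zero_of_isEmpty ω)
  have hd₁ : 1 ≤ d := by
    have h := hMn.trace_sub_le_trace_add (P := Mp)
    rw [← hω, trace_ptB, hω₁] at h
    exact_mod_cast h.trans hd
  obtain ⟨A, B, hA, hB, hA₁, hB₁, hAB⟩ :=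
    exists_smul_sub_smul_eq_of_trace_add_le hMp hMn hω (by rw [trace_ptB, hω₁]) hd
  refine oneShotCost_le_logb hd₁ (isPPTq_dilutionMap hA hB hA₁ hB₁) ?_
  rw [dilutionMap_MES A B (by omega), hAB]
  rfl

end OneShotCost

theorem oneShotCost_tensorPow_le_general {dA dB : ℕ}
    (ρ : BMat (Fin dA) (Fin dB)) (hρ : IsQuasiState ρ) (n : ℕ) :
    oneShotCost (tensorPow ρ n) ≤ Real.logb 2 (⌈(2 : ℝ) ^ ((n : ℝ) * EN ρ)⌉₊ : ℝ) := by
  obtain ⟨P, N, hP, hN, hσ, hPN⟩ := (isHermitian_ptB hρ.1).exists_sub_eq_traceNorm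
  obtain ⟨Mp, Mn, hMp, hMn, hsub, hadd⟩ :=
    exists_tensorFam_sub_eq_sub (fun _ : Fin n => hP) (fun _ => hN)
  have hnorm : 1 ≤ traceNorm (ptB ρ) := by
    have h := hN.trace_sub_le_trace_add (P := P)
    rw [← hσ, hPN, trace_ptB, hρ.2] at h
    exact_mod_cast h
  have hpow : (2 : ℝ) ^ ((n : ℝ) * EN ρ) = traceNorm (ptB ρ) ^ n := by
    rw [EN, mul_comm, Real.rpow_mul zero_le_two,
      Real.rpow_logb zero_lt_two (by norm_num) (by linarith), Real.rpow_natCast]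
  refine oneShotCost_le_of_ptB_eq_sub hMp hMn ?_ ?_ ?_
  · rw [tensorPow_eq_tensorFam, ptB_tensorFam, hσ]
    exact hsub
  · rw [tensorPow_eq_tensorFam, trace_tensorFam, hρ.2, prod_const_one]
  · rw [hadd, trace_tensorFam, hpow]
    simp only [Pi.add_apply, hPN, prod_const, card_univ, Fintype.card_fin]
    exact_mod_cast Nat.le_ceil _

/-- One-shot exact entanglement cost of `ρ^{⊗n}` under PPTq
operations is at most `log₂ ⌈2^{n·E_N(ρ)}⌉`. -/
theorem oneShotCost_tensorPow_le {dA dB : ℕ}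
    (ρ : BMat (Fin dA) (Fin dB)) (hρ : IsQuasiState ρ) (n : ℕ) (hn : 1 ≤ n) :
    oneShotCost (tensorPow ρ n) ≤ Real.logb 2 (⌈(2 : ℝ) ^ ((n : ℝ) * EN ρ)⌉₊ : ℝ) :=
  oneShotCost_tensorPow_le_general ρ hρ n
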